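/- arXiv:2602.09240 — 5 statements merged into one kernel-verified Lean document; each statement's English description precedes it below -/
import Mathlib

section
/- Let n ≥ 1 and d ≥ 3 be natural numbers, let T ∈ ℝ^{n×n} be a symmetric matrix, let u ∈ ℝ^n, c ∈ ℝ^d, K ∈ ℝ^{n×d}, and set M := u cᵀ + K ∈ ℝ^{n×d}. Then the ordered eigenvalues of the symmetric d×d matrices Mᵀ T M and Kᵀ T K satisfy λ₃(Kᵀ T K) ≤ λ₂(Mᵀ T M) ≤ λ₁(Kᵀ T K). -/
open Matrix

/-- The `k`-th largest eigenvalue (0-indexed, so `eigDesc hA 0` is the largest)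
of a real symmetric matrix `A`. -/
noncomputable def eigDesc {d : ℕ} {A : Matrix (Fin d) (Fin d) ℝ}
    (hA : A.IsHermitian) (k : Fin d) : ℝ :=
  hA.eigenvalues (Tuple.sort hA.eigenvalues (Fin.rev k))

namespace CFaux
open Module Submodule

variable {d : ℕ} {A : Matrix (Fin d) (Fin d) ℝ} (hA : A.IsHermitian)

lemma inner_eq_dot (x y : EuclideanSpace ℝ (Fin d)) :
    (inner ℝ x y : ℝ) = (x : Fin d → ℝ) ⬝ᵥ (y : Fin d → ℝ) := by
  simp [PiLp.inner_apply, RCLike.inner_apply, dotProduct, starRingEnd_apply]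
  exact Finset.sum_congr rfl (fun i _ => mul_comm _ _)

lemma repr_mulVec (x : EuclideanSpace ℝ (Fin d)) (i : Fin d) :
    hA.eigenvectorBasis.repr (WithLp.toLp 2 (A *ᵥ x : Fin d → ℝ) : EuclideanSpace ℝ (Fin d)) i
      = hA.eigenvalues i * hA.eigenvectorBasis.repr x i := by
  rw [OrthonormalBasis.repr_apply_apply, OrthonormalBasis.repr_apply_apply,
    inner_eq_dot, inner_eq_dot]
  rw [Matrix.dotProduct_mulVec, ← Matrix.mulVec_transpose]
  have hAT : Aᵀ = A := by
    have := hA.eq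
    rwa [Matrix.conjTranspose_eq_transpose_of_trivial] at this
  erw [hAT, hA.mulVec_eigenvectorBasis]; rw [smul_dotProduct, smul_eq_mul]

lemma dot_self_eq (x : EuclideanSpace ℝ (Fin d)) :
    (x : Fin d → ℝ) ⬝ᵥ (x : Fin d → ℝ) = ∑ i, (hA.eigenvectorBasis.repr x i)^2 := by
  have h := hA.eigenvectorBasis.repr.inner_map_map x x
  rw [inner_eq_dot, inner_eq_dot] at h
  rw [← h]
  simp [dotProduct, sq]

lemma quad_eq (x : EuclideanSpace ℝ (Fin d)) :
    (x : Fin d → ℝ) ⬝ᵥ (A *ᵥ x) = ∑ i, hA.eigenvalues i * (hA.eigenvectorBasis.repr x i)^2 := by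
  have h := hA.eigenvectorBasis.repr.inner_map_map x (WithLp.toLp 2 (A *ᵥ x : Fin d → ℝ) : EuclideanSpace ℝ (Fin d))
  rw [inner_eq_dot, inner_eq_dot] at h
  have h2 : ((hA.eigenvectorBasis.repr (WithLp.toLp 2 (A *ᵥ x : Fin d → ℝ) : EuclideanSpace ℝ (Fin d))) : Fin d → ℝ)
      = fun i => hA.eigenvalues i * hA.eigenvectorBasis.repr x i := by
    funext i; exact repr_mulVec hA x i
  rw [h2] at h
  rw [← h]
  simp [dotProduct, sq]
  congr 1; funext i; ring_nf

lemma repr_zero_of_not_mem {s : Set (Fin d)} {x : EuclideanSpace ℝ (Fin d)}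
    (hx : x ∈ span ℝ (⇑hA.eigenvectorBasis '' s)) {i : Fin d} (hi : i ∉ s) :
    hA.eigenvectorBasis.repr x i = 0 := by
  have hx' : x ∈ span ℝ (⇑hA.eigenvectorBasis.toBasis '' s) := by
    rwa [OrthonormalBasis.coe_toBasis]
  rw [Basis.mem_span_image] at hx'
  have h0 : hA.eigenvectorBasis.toBasis.repr x i = 0 := by
    by_contra h
    exact hi (hx' (Finsupp.mem_support_iff.mpr h))
  rwa [hA.eigenvectorBasis.coe_toBasis_repr_apply] at h0

lemma quad_le {s : Set (Fin d)} {x : EuclideanSpace ℝ (Fin d)}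
    (hx : x ∈ span ℝ (⇑hA.eigenvectorBasis '' s)) {r : ℝ}
    (hr : ∀ i ∈ s, hA.eigenvalues i ≤ r) :
    (x : Fin d → ℝ) ⬝ᵥ (A *ᵥ x) ≤ r * ((x : Fin d → ℝ) ⬝ᵥ (x : Fin d → ℝ)) := by
  rw [quad_eq hA, dot_self_eq hA, Finset.mul_sum]
  apply Finset.sum_le_sum
  intro i _
  by_cases h : i ∈ s
  · have := hr i h
    nlinarith [sq_nonneg (hA.eigenvectorBasis.repr x i)]
  · simp [repr_zero_of_not_mem hA hx h]

lemma le_quad {s : Set (Fin d)} {x : EuclideanSpace ℝ (Fin d)}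
    (hx : x ∈ span ℝ (⇑hA.eigenvectorBasis '' s)) {r : ℝ}
    (hr : ∀ i ∈ s, r ≤ hA.eigenvalues i) :
    r * ((x : Fin d → ℝ) ⬝ᵥ (x : Fin d → ℝ)) ≤ (x : Fin d → ℝ) ⬝ᵥ (A *ᵥ x) := by
  rw [quad_eq hA, dot_self_eq hA, Finset.mul_sum]
  apply Finset.sum_le_sum
  intro i _
  by_cases h : i ∈ s
  · have := hr i h
    nlinarith [sq_nonneg (hA.eigenvectorBasis.repr x i)]
  · simp [repr_zero_of_not_mem hA hx h]

lemma finrank_span_image (s : Finset (Fin d)) :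
    finrank ℝ (span ℝ (⇑hA.eigenvectorBasis '' (s : Set (Fin d)))) = s.card := by
  classical
  have hinj : Function.Injective ⇑hA.eigenvectorBasis := by
    have := hA.eigenvectorBasis.toBasis.injective
    rwa [OrthonormalBasis.coe_toBasis] at this
  have hli : LinearIndependent ℝ (fun j : (s : Set (Fin d)) => hA.eigenvectorBasis j) := by
    have := hA.eigenvectorBasis.toBasis.linearIndependent
    rw [OrthonormalBasis.coe_toBasis] at this
    exact this.comp _ Subtype.val_injective
  have h := finrank_span_set_eq_card (s := ⇑hA.eigenvectorBasis '' (s : Set (Fin d))) (LinearIndepOn.id_image (v := ⇑hA.eigenvectorBasis) (s := (s : Set (Fin d))) hli)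
  rw [h, Set.toFinset_image, Finset.card_image_of_injective _ hinj]
  simp


lemma eigDesc_antitone : Antitone (eigDesc hA) := by
  intro j k h
  exact Tuple.monotone_sort hA.eigenvalues (Fin.rev_le_rev.mpr h)

noncomputable def topIdx (k : Fin d) : Finset (Fin d) :=
  (Finset.Iic k).image (fun j => Tuple.sort hA.eigenvalues (Fin.rev j))

noncomputable def botIdx (k : Fin d) : Finset (Fin d) :=
  (Finset.Ici k).image (fun j => Tuple.sort hA.eigenvalues (Fin.rev j))

lemma srinj : Function.Injective (fun j : Fin d => Tuple.sort hA.eigenvalues (Fin.rev j)) :=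
  (Tuple.sort hA.eigenvalues).injective.comp Fin.rev_injective

lemma card_topIdx (k : Fin d) : (topIdx hA k).card = k + 1 := by
  rw [topIdx, Finset.card_image_of_injective _ (srinj hA), Fin.card_Iic]

lemma card_botIdx (k : Fin d) : (botIdx hA k).card = d - k := by
  rw [botIdx, Finset.card_image_of_injective _ (srinj hA), Fin.card_Ici]

lemma le_of_mem_topIdx {k i : Fin d} (hi : i ∈ topIdx hA k) :
    eigDesc hA k ≤ hA.eigenvalues i := by
  rw [topIdx, Finset.mem_image] at hi
  obtain ⟨j, hj, rfl⟩ := hi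
  exact eigDesc_antitone hA (Finset.mem_Iic.mp hj)

lemma mem_botIdx_le {k i : Fin d} (hi : i ∈ botIdx hA k) :
    hA.eigenvalues i ≤ eigDesc hA k := by
  rw [botIdx, Finset.mem_image] at hi
  obtain ⟨j, hj, rfl⟩ := hi
  exact eigDesc_antitone hA (Finset.mem_Ici.mp hj)

lemma eigenvalues_le_top (hd : 0 < d) (i : Fin d) :
    hA.eigenvalues i ≤ eigDesc hA ⟨0, hd⟩ := by
  have : i ∈ botIdx hA ⟨0, hd⟩ := by
    rw [botIdx, Finset.mem_image]
    exact ⟨Fin.rev ((Tuple.sort hA.eigenvalues).symm i), by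
      simp [Finset.mem_Ici, Fin.le_def], by simp⟩
  exact mem_botIdx_le hA this

-- dimension counting
lemma finrank_inf_ge (S T : Submodule ℝ (EuclideanSpace ℝ (Fin d))) :
    finrank ℝ S + finrank ℝ T ≤ d + finrank ℝ (S ⊓ T : Submodule ℝ (EuclideanSpace ℝ (Fin d))) := by
  have h := Submodule.finrank_sup_add_finrank_inf_eq S T
  have h2 : finrank ℝ (S ⊔ T : Submodule ℝ (EuclideanSpace ℝ (Fin d))) ≤ d := by
    have := Submodule.finrank_le (S ⊔ T)
    simpa [finrank_euclideanSpace] using this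
  omega

lemma exists_ne_zero_of_finrank_pos {S : Submodule ℝ (EuclideanSpace ℝ (Fin d))}
    (h : 0 < finrank ℝ S) : ∃ x, x ∈ S ∧ x ≠ 0 := by
  apply Submodule.exists_mem_ne_zero_of_ne_bot
  intro hbot
  rw [hbot] at h
  simp at h


end CFaux

section Main
open Module Submodule CFaux

/-- Courant–Fischer sandwich: for `M = u cᵀ + K` and symmetric `T`,
`λ₃(KᵀTK) ≤ λ₂(MᵀTM) ≤ λ₁(KᵀTK)`. -/
theorem stmt0 {n d : ℕ} (hn : 1 ≤ n) (hd : 3 ≤ d)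
    (T : Matrix (Fin n) (Fin n) ℝ) (hT : T.IsHermitian)
    (u : Fin n → ℝ) (c : Fin d → ℝ) (K : Matrix (Fin n) (Fin d) ℝ)
    (M : Matrix (Fin n) (Fin d) ℝ) (hM : M = Matrix.vecMulVec u c + K)
    (hMTM : (Mᵀ * T * M).IsHermitian) (hKTK : (Kᵀ * T * K).IsHermitian) :
    eigDesc hKTK ⟨2, by omega⟩ ≤ eigDesc hMTM ⟨1, by omega⟩ ∧
    eigDesc hMTM ⟨1, by omega⟩ ≤ eigDesc hKTK ⟨0, by omega⟩ := by
  classical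
  set k0 : Fin d := ⟨0, by omega⟩
  set k1 : Fin d := ⟨1, by omega⟩
  set k2 : Fin d := ⟨2, by omega⟩
  -- quadratic forms agree on the hyperplane c⊥
  have key : ∀ x : Fin d → ℝ, c ⬝ᵥ x = 0 →
      x ⬝ᵥ ((Mᵀ * T * M) *ᵥ x) = x ⬝ᵥ ((Kᵀ * T * K) *ᵥ x) := by
    intro x hc
    have hMx : M *ᵥ x = K *ᵥ x := by
      rw [hM, Matrix.add_mulVec]
      have h0 : Matrix.vecMulVec u c *ᵥ x = 0 := by
        funext i
        simp only [Matrix.mulVec, Matrix.vecMulVec_apply, dotProduct, Pi.zero_apply]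
        have hsum : ∑ j, u i * c j * x j = u i * (c ⬝ᵥ x) := by
          rw [dotProduct, Finset.mul_sum]
          exact Finset.sum_congr rfl (fun j _ => by ring)
        rw [hsum, hc, mul_zero]
      rw [h0, zero_add]
    have expand : ∀ (P : Matrix (Fin n) (Fin d) ℝ),
        x ⬝ᵥ ((Pᵀ * T * P) *ᵥ x) = (P *ᵥ x) ⬝ᵥ (T *ᵥ (P *ᵥ x)) := by
      intro P
      rw [← Matrix.mulVec_mulVec, ← Matrix.mulVec_mulVec,
        Matrix.dotProduct_mulVec, Matrix.vecMul_transpose]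
    rw [expand M, expand K, hMx]
  -- the hyperplane c⊥ as a submodule
  let f : EuclideanSpace ℝ (Fin d) →ₗ[ℝ] ℝ :=
    { toFun := fun x => c ⬝ᵥ (x : Fin d → ℝ)
      map_add' := fun a b => dotProduct_add c a b
      map_smul' := fun r a => dotProduct_smul r c a }
  have hCrank : d ≤ finrank ℝ (LinearMap.ker f) + 1 := by
    have h := LinearMap.finrank_range_add_finrank_ker f
    have h1 : finrank ℝ (LinearMap.range f) ≤ 1 := by
      simpa using (Submodule.finrank_le (LinearMap.range f))
    rw [finrank_euclideanSpace, Fintype.card_fin] at h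
    omega
  have hposdot : ∀ x : EuclideanSpace ℝ (Fin d), x ≠ 0 →
      0 < (x : Fin d → ℝ) ⬝ᵥ (x : Fin d → ℝ) := by
    intro x hx
    have hex : ∃ i, (x : Fin d → ℝ) i ≠ 0 := by
      by_contra h
      push_neg at h
      exact hx (by ext i; exact h i)
    obtain ⟨i, hi⟩ := hex
    have : (x : Fin d → ℝ) ⬝ᵥ (x : Fin d → ℝ) = ∑ j, (x : Fin d → ℝ) j * (x : Fin d → ℝ) j := rfl
    rw [this]
    exact Finset.sum_pos' (fun j _ => mul_self_nonneg _)
      ⟨i, Finset.mem_univ i, mul_self_pos.mpr hi⟩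
  have spanTopKTK : span ℝ (Set.range ⇑hKTK.eigenvectorBasis) = ⊤ := by
    have := hKTK.eigenvectorBasis.toBasis.span_eq
    rwa [OrthonormalBasis.coe_toBasis] at this
  constructor
  · -- λ₃(B) ≤ λ₂(A)
    set W := span ℝ (⇑hKTK.eigenvectorBasis '' ((topIdx hKTK k2 : Finset (Fin d)) : Set (Fin d)))
    set U := span ℝ (⇑hMTM.eigenvectorBasis '' ((botIdx hMTM k1 : Finset (Fin d)) : Set (Fin d)))
    have hW : finrank ℝ W = 3 := by
      rw [finrank_span_image hKTK, card_topIdx hKTK]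
    have hU : finrank ℝ U = d - 1 := by
      rw [finrank_span_image hMTM, card_botIdx hMTM]
    have h1 : 2 ≤ finrank ℝ (W ⊓ LinearMap.ker f : Submodule ℝ (EuclideanSpace ℝ (Fin d))) := by
      have := finrank_inf_ge W (LinearMap.ker f)
      omega
    have h2 : 0 < finrank ℝ ((W ⊓ LinearMap.ker f) ⊓ U : Submodule ℝ (EuclideanSpace ℝ (Fin d))) := by
      have := finrank_inf_ge (W ⊓ LinearMap.ker f) U
      omega
    obtain ⟨x, hxmem, hx0⟩ := exists_ne_zero_of_finrank_pos h2
    obtain ⟨⟨hxW, hxC⟩, hxU⟩ := hxmem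
    have hcx : c ⬝ᵥ (x : Fin d → ℝ) = 0 := hxC
    have lb := le_quad hKTK hxW (r := eigDesc hKTK k2)
      (fun i hi => le_of_mem_topIdx hKTK (Finset.mem_coe.mp hi))
    have ub := quad_le hMTM hxU (r := eigDesc hMTM k1)
      (fun i hi => mem_botIdx_le hMTM (Finset.mem_coe.mp hi))
    rw [← key x hcx] at lb
    have := lb.trans ub
    exact le_of_mul_le_mul_right (by linarith) (hposdot x hx0)
  · -- λ₂(A) ≤ λ₁(B)
    set S := span ℝ (⇑hMTM.eigenvectorBasis '' ((topIdx hMTM k1 : Finset (Fin d)) : Set (Fin d)))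
    have hS : finrank ℝ S = 2 := by
      rw [finrank_span_image hMTM, card_topIdx hMTM]
    have h1 : 0 < finrank ℝ (S ⊓ LinearMap.ker f : Submodule ℝ (EuclideanSpace ℝ (Fin d))) := by
      have := finrank_inf_ge S (LinearMap.ker f)
      omega
    obtain ⟨x, hxmem, hx0⟩ := exists_ne_zero_of_finrank_pos h1
    obtain ⟨hxS, hxC⟩ := hxmem
    have hcx : c ⬝ᵥ (x : Fin d → ℝ) = 0 := hxC
    have lb := le_quad hMTM hxS (r := eigDesc hMTM k1)
      (fun i hi => le_of_mem_topIdx hMTM (Finset.mem_coe.mp hi))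
    have hxtop : x ∈ span ℝ (⇑hKTK.eigenvectorBasis '' (Set.univ : Set (Fin d))) := by
      rw [Set.image_univ, spanTopKTK]
      trivial
    have ub := quad_le hKTK hxtop (r := eigDesc hKTK k0)
      (fun i _ => eigenvalues_le_top hKTK (by omega) i)
    rw [key x hcx] at lb
    have := lb.trans ub
    exact le_of_mul_le_mul_right (by linarith) (hposdot x hx0)

end Main
end

section
/- Let μ be a compactly supported Borel probability measure on ℝ that is not a Dirac point mass. Then for every z ∈ ℂ with Im z > 0 one has m₁(z) := ∫ x/(x−z) dμ(x) ≠ 0 and Im( m₀(z) / m₁(z) ) > 0, where m₀(z) := ∫ 1/(x−z) dμ(x). In other words, the map L(z) := (∫ (x−z)⁻¹ dμ(x)) · (∫ x (x−z)⁻¹ dμ(x))⁻¹ sends the upper half-plane ℂ₊ into ℂ₊. -/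
open MeasureTheory Complex

lemma integrable_of_bdd_cont {μ : Measure ℝ} [IsFiniteMeasure μ] {E : Type*}
    [NormedAddCommGroup E] {g : ℝ → E} (hg : Continuous g) (C : ℝ) (h : ∀ x, ‖g x‖ ≤ C) :
    Integrable g μ :=
  (integrable_const C).mono' hg.aestronglyMeasurable (ae_of_all _ h)

lemma eq_dirac_of_ae_eq {μ : Measure ℝ} [IsProbabilityMeasure μ] {a : ℝ}
    (h : ∀ᵐ x ∂μ, x = a) : μ = Measure.dirac a := by
  have hc : μ {x : ℝ | ¬ x = a} = 0 := h
  ext s hs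
  rw [Measure.dirac_apply' a hs]
  by_cases ha : a ∈ s
  · simp only [ha, Set.indicator_of_mem, Pi.one_apply]
    have hsub : sᶜ ⊆ {x : ℝ | ¬ x = a} := by
      intro x hx hxa
      subst hxa
      exact hx ha
    have hsc : μ sᶜ = 0 := measure_mono_null hsub hc
    have := measure_add_measure_compl hs (μ := μ)
    rw [hsc, add_zero, measure_univ] at this
    exact this
  · simp only [ha, Set.indicator_of_notMem, not_false_eq_true]
    have hsub : s ⊆ {x : ℝ | ¬ x = a} := by
      intro x hx hxa
      subst hxa
      exact ha hx
    exact measure_mono_null hsub hc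

/-- For a compactly supported, non-degenerate Borel probability measure `μ` on `ℝ`
and `z` in the upper half-plane, `m₁(z) := ∫ x/(x−z) dμ ≠ 0` and
`Im(m₀(z)/m₁(z)) > 0`, i.e. `L := m₀/m₁` maps `ℂ₊` into `ℂ₊`. -/
theorem stmt2 (μ : Measure ℝ) [IsProbabilityMeasure μ]
    (hcs : ∃ K : Set ℝ, IsCompact K ∧ μ Kᶜ = 0)
    (hnd : ∀ a : ℝ, μ ≠ Measure.dirac a) :
    ∀ z : ℂ, 0 < z.im →
      (∫ x, (x : ℂ) / ((x : ℂ) - z) ∂μ) ≠ 0 ∧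
      0 < ((∫ x, 1 / ((x : ℂ) - z) ∂μ) / (∫ x, (x : ℂ) / ((x : ℂ) - z) ∂μ)).im := by
  intro z hz
  have hzim : z.im ≠ 0 := ne_of_gt hz
  set f : ℝ → ℂ := fun x => ((x : ℂ) - z)⁻¹ with hfdef
  have hden : ∀ x : ℝ, (x : ℂ) - z ≠ 0 := by
    intro x h
    have h2 : ((x : ℂ) - z).im = 0 := by rw [h]; simp
    simp only [Complex.sub_im, Complex.ofReal_im, zero_sub, neg_eq_zero] at h2
    exact hzim h2
  have hcont : Continuous f := (Complex.continuous_ofReal.sub continuous_const).inv₀ hden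
  have hbound : ∀ x : ℝ, ‖f x‖ ≤ (z.im)⁻¹ := by
    intro x
    rw [hfdef]
    simp only [norm_inv]
    refine inv_anti₀ hz ?_
    calc z.im = |((x : ℂ) - z).im| := by
          simp [Complex.sub_im, abs_of_pos hz]
      _ ≤ ‖(x : ℂ) - z‖ := Complex.abs_im_le_norm _
      _ = ‖(x : ℂ) - z‖ := rfl
  have hfi : Integrable f μ := integrable_of_bdd_cont hcont _ hbound
  set c : ℂ := ∫ x, f x ∂μ with hc
  have hnsbound : ∀ x : ℝ, ‖Complex.normSq (f x)‖ ≤ (z.im)⁻¹ * (z.im)⁻¹ := by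
    intro x
    rw [Real.norm_eq_abs, _root_.abs_of_nonneg (Complex.normSq_nonneg _), Complex.normSq_eq_norm_sq]
    have hb := hbound x
    have h0 : (0:ℝ) ≤ ‖f x‖ := norm_nonneg _
    calc ‖f x‖^2 = ‖f x‖ * ‖f x‖ := by rw [sq]
      _ ≤ (z.im)⁻¹ * (z.im)⁻¹ := mul_le_mul hb hb h0 (le_of_lt (inv_pos.mpr hz))
  have hfi2 : Integrable (fun x => Complex.normSq (f x)) μ :=
    integrable_of_bdd_cont (Complex.continuous_normSq.comp hcont) _ hnsbound
  set I2 : ℝ := ∫ x, Complex.normSq (f x) ∂μ with hI2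
  have hintsub : Integrable (fun x => Complex.normSq (f x - c)) μ := by
    refine integrable_of_bdd_cont (Complex.continuous_normSq.comp (hcont.sub continuous_const))
      (((z.im)⁻¹ + ‖c‖) * ((z.im)⁻¹ + ‖c‖)) ?_
    intro x
    rw [Real.norm_eq_abs, _root_.abs_of_nonneg (Complex.normSq_nonneg _), Complex.normSq_eq_norm_sq]
    have h1 : ‖f x - c‖ ≤ (z.im)⁻¹ + ‖c‖ :=
      (norm_sub_le _ _).trans (add_le_add_left (hbound x) _)
    have h0 : (0:ℝ) ≤ ‖f x - c‖ := norm_nonneg _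
    calc ‖f x - c‖^2 = ‖f x - c‖ * ‖f x - c‖ := by rw [sq]
      _ ≤ ((z.im)⁻¹ + ‖c‖) * ((z.im)⁻¹ + ‖c‖) :=
        mul_le_mul h1 h1 h0 (add_nonneg (le_of_lt (inv_pos.mpr hz)) (norm_nonneg _))
  have hintg2 : Integrable (fun x => (f x * (starRingEnd ℂ) c).re) μ :=
    (hfi.mul_const _).re
  have hg2val : (∫ x, (f x * (starRingEnd ℂ) c).re ∂μ) = Complex.normSq c := by
    have hre : ∫ x, (f x * (starRingEnd ℂ) c).re ∂μ
        = (∫ x, f x * (starRingEnd ℂ) c ∂μ).re := integral_re (hfi.mul_const _)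
    rw [hre, integral_mul_const, ← hc, Complex.mul_conj]
    simp
  have hvar : ∫ x, Complex.normSq (f x - c) ∂μ = I2 - Complex.normSq c := by
    have hpt : ∀ x : ℝ, Complex.normSq (f x - c)
        = Complex.normSq (f x) - 2 * (f x * (starRingEnd ℂ) c).re + Complex.normSq c := by
      intro x; rw [Complex.normSq_sub]; ring
    calc ∫ x, Complex.normSq (f x - c) ∂μ
        = ∫ x, (Complex.normSq (f x) - 2 * (f x * (starRingEnd ℂ) c).re
            + Complex.normSq c) ∂μ := integral_congr_ae (ae_of_all _ hpt)
      _ = (∫ x, (Complex.normSq (f x) - 2 * (f x * (starRingEnd ℂ) c).re) ∂μ)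
            + ∫ _x, (Complex.normSq c : ℝ) ∂μ :=
          integral_add (hfi2.sub (hintg2.const_mul 2)) (integrable_const _)
      _ = I2 - 2 * Complex.normSq c + Complex.normSq c := by
          rw [integral_sub hfi2 (hintg2.const_mul 2), integral_const_mul, hg2val,
            integral_const, probReal_univ]
          simp [hI2]
      _ = I2 - Complex.normSq c := by ring
  have hpos : 0 < I2 - Complex.normSq c := by
    rw [← hvar]
    rcases (integral_nonneg (f := fun x => Complex.normSq (f x - c)) (fun x => Complex.normSq_nonneg (f x - c))).lt_or_eq with h | h
    · exact h
    · exfalso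
      have hae : ∀ᵐ x ∂μ, Complex.normSq (f x - c) = 0 :=
        (integral_eq_zero_iff_of_nonneg
          (fun x => Complex.normSq_nonneg (f x - c)) hintsub).mp h.symm
      have haec : ∀ᵐ x ∂μ, f x = c := by
        filter_upwards [hae] with x hx
        exact sub_eq_zero.mp (Complex.normSq_eq_zero.mp hx)
      have hne : (ae μ).NeBot := ae_neBot.mpr (IsProbabilityMeasure.ne_zero μ)
      obtain ⟨x₀, hx₀⟩ := haec.exists
      have haex : ∀ᵐ x ∂μ, x = x₀ := by
        filter_upwards [haec] with x hx
        have h1 : ((x:ℂ) - z)⁻¹ = ((x₀:ℂ) - z)⁻¹ := hx.trans hx₀.symm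
        have h2 : (x:ℂ) - z = (x₀:ℂ) - z := by
          have := congrArg (·⁻¹) h1
          simpa [inv_inv] using this
        have h3 : (x:ℂ) = (x₀:ℂ) := by linear_combination h2
        exact_mod_cast h3
      exact hnd x₀ (eq_dirac_of_ae_eq haex)
  have hptim : ∀ x : ℝ, (f x).im = z.im * Complex.normSq (f x) := by
    intro x
    rw [hfdef]
    simp [Complex.inv_im, Complex.sub_im, map_inv₀, div_eq_mul_inv]
  have him0 : c.im = z.im * I2 := by
    have him' : (∫ x, f x ∂μ).im = ∫ x, (f x).im ∂μ := (integral_im hfi).symm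
    rw [hc, him']
    calc ∫ x, (f x).im ∂μ = ∫ x, z.im * Complex.normSq (f x) ∂μ :=
          integral_congr_ae (ae_of_all _ hptim)
      _ = z.im * I2 := by rw [integral_const_mul]
  have hm1pt : ∀ x : ℝ, (x:ℂ) / ((x:ℂ) - z) = 1 + z * f x := by
    intro x
    have hx : (x:ℂ) = ((x:ℂ) - z) + z := by ring
    calc (x:ℂ) / ((x:ℂ) - z) = (((x:ℂ) - z) + z) / ((x:ℂ) - z) := by rw [← hx]
      _ = 1 + z * f x := by
          rw [add_div, div_self (hden x), div_eq_mul_inv]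
  have hm1 : (∫ x, (x:ℂ) / ((x:ℂ) - z) ∂μ) = 1 + z * c := by
    calc (∫ x, (x:ℂ) / ((x:ℂ) - z) ∂μ) = ∫ x, (1 + z * f x) ∂μ :=
          integral_congr_ae (ae_of_all _ hm1pt)
      _ = (∫ _x, (1:ℂ) ∂μ) + ∫ x, z * f x ∂μ :=
          integral_add (integrable_const _) (hfi.const_mul z)
      _ = 1 + z * c := by
          rw [integral_const, probReal_univ, integral_const_mul]
          simp [hc]
  have e0 : (∫ x, 1 / ((x:ℂ) - z) ∂μ) = c := by
    rw [hc]
    congr 1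
    funext x
    rw [one_div]
  set m1 : ℂ := 1 + z * c with hm1def
  have hcm : c * (starRingEnd ℂ) m1 = c + (starRingEnd ℂ) z * (Complex.normSq c : ℂ) := by
    rw [hm1def, map_add, map_one, map_mul, ← Complex.mul_conj]
    ring
  have hkeyim : (c * (starRingEnd ℂ) m1).im = z.im * (I2 - Complex.normSq c) := by
    rw [hcm]
    simp only [Complex.add_im, Complex.mul_im, Complex.conj_im, Complex.conj_re,
      Complex.ofReal_re, Complex.ofReal_im, him0]
    ring
  have hkey : 0 < (c * (starRingEnd ℂ) m1).im := by
    rw [hkeyim]; exact mul_pos hz hpos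
  have hm1ne : m1 ≠ 0 := by
    intro h
    rw [h] at hkey
    simp at hkey
  constructor
  · rw [hm1]; exact hm1ne
  · rw [e0, hm1]
    have hdiv : (c / m1).im = (c * (starRingEnd ℂ) m1).im / Complex.normSq m1 := by
      rw [Complex.div_im, Complex.mul_im, Complex.conj_re, Complex.conj_im]
      ring
    rw [hdiv]
    exact div_pos hkey (Complex.normSq_pos.mpr hm1ne)
end

section
/- Assume the generalized linear model setup below and that the function y ↦ (∫ (z²/σ² − 1) Q(y,z) dγ(z))² / p(y) is ν-integrable, with integral I. Let ḡ : ℝ → ℝ be a bounded measurable function satisfying E[ḡ(Y)] = ∫∫ ḡ(y) Q(y,z) dγ(z) dν(y) = 0. If c · (E[ḡ(Y) Z²/σ²])² > E[ḡ(Y)²], then c · I > 1. (Converse direction of the optimal weak-recovery threshold theorem: if some admissible preprocessing function achieves the criticality condition, then the threshold condition c·I > 1 must hold.) -/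
open MeasureTheory ProbabilityTheory

lemma gaussian_sq_integrable (v : NNReal) (hv : v ≠ 0) :
    Integrable (fun z : ℝ => z ^ 2) (gaussianReal 0 v) := by
  rw [gaussianReal_of_var_ne_zero 0 hv,
    integrable_withDensity_iff (measurable_gaussianPDF 0 v)
      (Filter.Eventually.of_forall fun x => ENNReal.ofReal_lt_top)]
  have hb : (0:ℝ) < (2 * (v:ℝ))⁻¹ := by positivity
  have h := (integrable_rpow_mul_exp_neg_mul_sq hb (s := 2) (by norm_num)).const_mul
    (Real.sqrt (2 * Real.pi * v))⁻¹
  refine h.congr (Filter.Eventually.of_forall fun x => ?_)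
  simp only [gaussianPDF_def]
  rw [ENNReal.toReal_ofReal (gaussianPDFReal_nonneg 0 v x)]
  simp only [gaussianPDFReal, sub_zero]
  have e : x ^ (2:ℝ) = x ^ (2:ℕ) := by
    rw [← Real.rpow_natCast]; norm_num
  rw [e, show -x ^ 2 / (2 * (v:ℝ)) = -(2 * (v:ℝ))⁻¹ * x ^ 2 by ring]
  ring

/-- Converse direction of the optimal weak-recovery threshold theorem for GLMs with
orthogonally invariant design: if a bounded, mean-zero preprocessing function `ḡ`
satisfies the criticality condition `c·(E[ḡ(Y)Z²/σ²])² > E[ḡ(Y)²]`, then the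
threshold condition `c·I > 1` holds, where
`I = ∫ (∫ (z²/σ²−1) Q(y,z) dγ(z))² / p(y) dν(y)`. -/
theorem stmt5 (σ : ℝ) (hσ : 0 < σ)
    (ν : Measure ℝ) [SigmaFinite ν]
    (Q : ℝ → ℝ → ℝ) (hQmeas : Measurable (Function.uncurry Q))
    (hQnonneg : ∀ y z, 0 ≤ Q y z)
    (hQdens : ∀ z, ∫ y, Q y z ∂ν = 1)
    (γ : Measure ℝ) (hγ : γ = gaussianReal 0 (σ ^ 2).toNNReal)
    (p : ℝ → ℝ) (hp : ∀ y, p y = ∫ z, Q y z ∂γ)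
    (I : ℝ)
    (hIint : Integrable (fun y => (∫ z, (z ^ 2 / σ ^ 2 - 1) * Q y z ∂γ) ^ 2 / p y) ν)
    (hI : I = ∫ y, (∫ z, (z ^ 2 / σ ^ 2 - 1) * Q y z ∂γ) ^ 2 / p y ∂ν)
    (g : ℝ → ℝ) (hgmeas : Measurable g) (hgbdd : ∃ Cg : ℝ, ∀ y, |g y| ≤ Cg)
    (hgmean : ∫ y, ∫ z, g y * Q y z ∂γ ∂ν = 0)
    (c : ℝ) (hc : 0 < c)
    (hcrit : c * (∫ y, ∫ z, g y * (z ^ 2 / σ ^ 2) * Q y z ∂γ ∂ν) ^ 2 >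
      ∫ y, ∫ z, (g y) ^ 2 * Q y z ∂γ ∂ν) :
    c * I > 1 := by
  have hprob : IsProbabilityMeasure γ := hγ ▸ inferInstance
  -- measurability facts
  have hQzmeas : ∀ z, Measurable fun y => Q y z :=
    fun z => hQmeas.comp (measurable_id.prodMk measurable_const)
  have hQymeas : ∀ y, Measurable (Q y) :=
    fun y => hQmeas.comp (measurable_const.prodMk measurable_id)
  -- Q (· z) is ν-integrable for each z (else its integral would be 0, not 1)
  have hQint_z : ∀ z, Integrable (fun y => Q y z) ν := by
    intro z
    by_contra h
    have := hQdens z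
    rw [integral_undef h] at this
    exact one_ne_zero this.symm
  -- Tonelli computation 1
  have hlin : ∀ z, (∫⁻ y, ENNReal.ofReal (Q y z) ∂ν) = 1 := by
    intro z
    rw [← ofReal_integral_eq_lintegral_ofReal (hQint_z z)
      (Filter.Eventually.of_forall fun y => hQnonneg y z), hQdens z, ENNReal.ofReal_one]
  have hae1 : AEMeasurable (Function.uncurry fun y z => ENNReal.ofReal (Q y z)) (ν.prod γ) :=
    (ENNReal.measurable_ofReal.comp hQmeas).aemeasurable
  have L1 : (∫⁻ y, ∫⁻ z, ENNReal.ofReal (Q y z) ∂γ ∂ν) = 1 := by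
    rw [lintegral_lintegral_swap hae1]
    simp only [hlin]
    simp
  -- Tonelli computation 2 (second moment weight)
  have hv : ((σ:ℝ) ^ 2).toNNReal ≠ 0 := by
    simp [Real.toNNReal_eq_zero, not_le]
    positivity
  have hz2 : Integrable (fun z : ℝ => z ^ 2 / σ ^ 2) γ := by
    rw [hγ]; exact (gaussian_sq_integrable _ hv).div_const _
  have hz2nn : ∀ z : ℝ, (0:ℝ) ≤ z ^ 2 / σ ^ 2 := fun z => by positivity
  have hae2 : AEMeasurable (Function.uncurry fun y z => ENNReal.ofReal (z ^ 2 / σ ^ 2 * Q y z))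
      (ν.prod γ) := by
    apply Measurable.aemeasurable
    apply ENNReal.measurable_ofReal.comp
    exact ((measurable_snd.pow measurable_const).div_const _).mul hQmeas
  have L2 : (∫⁻ y, ∫⁻ z, ENNReal.ofReal (z ^ 2 / σ ^ 2 * Q y z) ∂γ ∂ν) ≠ ⊤ := by
    rw [lintegral_lintegral_swap hae2]
    have : ∀ z : ℝ, (∫⁻ y, ENNReal.ofReal (z ^ 2 / σ ^ 2 * Q y z) ∂ν)
        = ENNReal.ofReal (z ^ 2 / σ ^ 2) := by
      intro z
      rw [show (fun y => ENNReal.ofReal (z ^ 2 / σ ^ 2 * Q y z))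
          = fun y => ENNReal.ofReal (z ^ 2 / σ ^ 2) * ENNReal.ofReal (Q y z) by
        funext y; rw [← ENNReal.ofReal_mul (hz2nn z)],
        lintegral_const_mul _ ((hQzmeas z).ennreal_ofReal), hlin z, mul_one]
    simp only [this]
    rw [← ofReal_integral_eq_lintegral_ofReal hz2
      (Filter.Eventually.of_forall hz2nn)]
    exact ENNReal.ofReal_ne_top
  -- a.e. integrability of slices
  have haeQ : ∀ᵐ y ∂ν, Integrable (fun z => Q y z) γ := by
    have hmeas : Measurable fun y => ∫⁻ z, ENNReal.ofReal (Q y z) ∂γ :=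
      Measurable.lintegral_prod_right (ENNReal.measurable_ofReal.comp hQmeas)
    have hfin : ∀ᵐ y ∂ν, (∫⁻ z, ENNReal.ofReal (Q y z) ∂γ) < ⊤ :=
      ae_lt_top hmeas (by rw [L1]; exact ENNReal.one_ne_top)
    filter_upwards [hfin] with y hy
    refine ⟨(hQymeas y).aestronglyMeasurable, ?_⟩
    rw [hasFiniteIntegral_iff_ofReal (Filter.Eventually.of_forall fun z => hQnonneg y z)]
    exact hy
  have haeQ2 : ∀ᵐ y ∂ν, Integrable (fun z => z ^ 2 / σ ^ 2 * Q y z) γ := by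
    have hmeas : Measurable fun y => ∫⁻ z, ENNReal.ofReal (z ^ 2 / σ ^ 2 * Q y z) ∂γ :=
      Measurable.lintegral_prod_right
        (ENNReal.measurable_ofReal.comp (((measurable_snd.pow_const 2).div_const _).mul hQmeas))
    have hfin : ∀ᵐ y ∂ν, (∫⁻ z, ENNReal.ofReal (z ^ 2 / σ ^ 2 * Q y z) ∂γ) < ⊤ :=
      ae_lt_top hmeas L2
    filter_upwards [hfin] with y hy
    refine ⟨(((measurable_id.pow_const 2).div_const _).mul (hQymeas y)).aestronglyMeasurable, ?_⟩
    rw [hasFiniteIntegral_iff_ofReal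
      (Filter.Eventually.of_forall fun z => mul_nonneg (hz2nn z) (hQnonneg y z))]
    exact hy
  -- the three marginal functions
  set a : ℝ → ℝ := fun y => ∫ z, (z ^ 2 / σ ^ 2 - 1) * Q y z ∂γ with ha
  set B : ℝ → ℝ := fun y => ∫ z, z ^ 2 / σ ^ 2 * Q y z ∂γ with hB
  have hpnn : ∀ y, 0 ≤ p y := fun y => (hp y) ▸ integral_nonneg fun z => hQnonneg y z
  have hBnn : ∀ y, 0 ≤ B y := fun y =>
    integral_nonneg fun z => mul_nonneg (hz2nn z) (hQnonneg y z)
  have hpmeas : AEStronglyMeasurable p ν := by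
    have : p = fun y => ∫ z, Q y z ∂γ := funext hp
    rw [this]
    exact (hQmeas.stronglyMeasurable.integral_prod_right).aestronglyMeasurable
  have hBmeas : AEStronglyMeasurable B ν := by
    rw [hB]
    exact (StronglyMeasurable.integral_prod_right
      ((((measurable_snd.pow_const 2).div_const _).mul hQmeas).stronglyMeasurable)).aestronglyMeasurable
  have hpint : Integrable p ν := by
    refine ⟨hpmeas, ?_⟩
    rw [hasFiniteIntegral_iff_ofReal (Filter.Eventually.of_forall hpnn)]
    have : ∀ᵐ y ∂ν, ENNReal.ofReal (p y) = ∫⁻ z, ENNReal.ofReal (Q y z) ∂γ := by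
      filter_upwards [haeQ] with y hy
      rw [hp y, ofReal_integral_eq_lintegral_ofReal hy
        (Filter.Eventually.of_forall fun z => hQnonneg y z)]
    rw [lintegral_congr_ae this, L1]
    exact ENNReal.one_lt_top
  have hBint : Integrable B ν := by
    refine ⟨hBmeas, ?_⟩
    rw [hasFiniteIntegral_iff_ofReal (Filter.Eventually.of_forall hBnn)]
    have : ∀ᵐ y ∂ν, ENNReal.ofReal (B y) = ∫⁻ z, ENNReal.ofReal (z ^ 2 / σ ^ 2 * Q y z) ∂γ := by
      filter_upwards [haeQ2] with y hy
      rw [hB]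
      rw [ofReal_integral_eq_lintegral_ofReal hy
        (Filter.Eventually.of_forall fun z => mul_nonneg (hz2nn z) (hQnonneg y z))]
    rw [lintegral_congr_ae this]
    exact lt_top_iff_ne_top.mpr L2
  -- a = B - p a.e.
  have haB : ∀ᵐ y ∂ν, a y = B y - p y := by
    filter_upwards [haeQ, haeQ2] with y h1 h2
    rw [ha, hB, hp y]
    simp only
    rw [show (fun z => (z ^ 2 / σ ^ 2 - 1) * Q y z)
        = fun z => z ^ 2 / σ ^ 2 * Q y z - Q y z by funext z; ring]
    exact integral_sub h2 h1
  -- a vanishes (a.e.) where p vanishes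
  have hazero : ∀ᵐ y ∂ν, p y = 0 → a y = 0 := by
    filter_upwards [haeQ] with y hy hpy
    have hQ0 : (fun z => Q y z) =ᵐ[γ] 0 :=
      (integral_eq_zero_iff_of_nonneg (fun z => hQnonneg y z) hy).mp (by rw [← hp y]; exact hpy)
    rw [ha]
    simp only
    rw [integral_congr_ae (g := fun _ => (0:ℝ))
      (hQ0.mono fun z hz => by simp only [Pi.zero_apply] at hz; simp [hz]), integral_zero]
  obtain ⟨Cg, hCg⟩ := hgbdd
  -- pointwise rewrites of the inner integrals
  have e1 : ∀ y, (∫ z, g y * Q y z ∂γ) = g y * p y := fun y => by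
    rw [hp y]; exact integral_const_mul _ _
  have e2 : ∀ y, (∫ z, g y * (z ^ 2 / σ ^ 2) * Q y z ∂γ) = g y * B y := fun y => by
    rw [hB]; simp only [mul_assoc]; exact integral_const_mul _ _
  have e3 : ∀ y, (∫ z, (g y) ^ 2 * Q y z ∂γ) = g y ^ 2 * p y := fun y => by
    rw [hp y]; exact integral_const_mul _ _
  have hgp0 : ∫ y, g y * p y ∂ν = 0 := by
    rw [← hgmean]
    exact integral_congr_ae (Filter.Eventually.of_forall fun y => (e1 y).symm)
  have hcrit' : c * (∫ y, g y * B y ∂ν) ^ 2 > ∫ y, g y ^ 2 * p y ∂ν := by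
    rwa [integral_congr_ae (Filter.Eventually.of_forall e2),
      integral_congr_ae (Filter.Eventually.of_forall e3)] at hcrit
  -- integrability over ν
  have hgbound : ∃ C, ∀ y, ‖g y‖ ≤ C := ⟨Cg, fun y => by simpa [Real.norm_eq_abs] using hCg y⟩
  have hg2bound : ∃ C, ∀ y, ‖g y ^ 2‖ ≤ C := by
    refine ⟨Cg ^ 2, fun y => ?_⟩
    rw [Real.norm_eq_abs, abs_pow]
    exact pow_le_pow_left₀ (abs_nonneg _) (hCg y) 2
  have hgB : Integrable (fun y => g y * B y) ν :=
    hBint.bdd_mul hgmeas.aestronglyMeasurable (Filter.Eventually.of_forall hgbound.choose_spec)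
  have hgp : Integrable (fun y => g y * p y) ν :=
    hpint.bdd_mul hgmeas.aestronglyMeasurable (Filter.Eventually.of_forall hgbound.choose_spec)
  have hg2p : Integrable (fun y => g y ^ 2 * p y) ν :=
    hpint.bdd_mul (hgmeas.pow_const 2).aestronglyMeasurable (Filter.Eventually.of_forall hg2bound.choose_spec)
  have hgBp : Integrable (fun y => g y * B y - g y * p y) ν := hgB.sub hgp
  have hga : Integrable (fun y => g y * a y) ν :=
    hgBp.congr (haB.mono fun y h => by simp only; rw [h]; ring)
  have hST : (∫ y, g y * B y ∂ν) = ∫ y, g y * a y ∂ν := by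
    rw [integral_congr_ae (g := fun y => g y * a y + g y * p y)
      (haB.mono fun y h => by simp only; rw [h]; ring),
      integral_add hga hgp, hgp0, add_zero]
  set T : ℝ := ∫ y, g y * a y ∂ν with hT
  set V : ℝ := ∫ y, g y ^ 2 * p y ∂ν with hV
  have hcrit2 : c * T ^ 2 > V := by rw [← hST]; exact hcrit'
  have hVnn : 0 ≤ V := integral_nonneg fun y => mul_nonneg (sq_nonneg _) (hpnn y)
  -- Cauchy–Schwarz setup
  set u : ℝ → ℝ := fun y => a y / Real.sqrt (p y) with hu
  set w : ℝ → ℝ := fun y => g y * Real.sqrt (p y) with hw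
  have husq : ∀ y, u y ^ 2 = a y ^ 2 / p y := fun y => by
    rw [hu]; simp only; rw [div_pow, Real.sq_sqrt (hpnn y)]
  have hwsq : ∀ y, w y ^ 2 = g y ^ 2 * p y := fun y => by
    rw [hw]; simp only; rw [mul_pow, Real.sq_sqrt (hpnn y)]
  have huw : ∀ᵐ y ∂ν, u y * w y = g y * a y := by
    filter_upwards [hazero] with y hy
    rcases eq_or_lt_of_le (hpnn y) with h0 | h0
    · rw [hu, hw]; simp only
      rw [hy h0.symm, ← h0]
      simp
    · have hs : Real.sqrt (p y) ≠ 0 := by positivity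
      rw [hu, hw]; simp only
      field_simp
  have hIu : Integrable (fun y => u y ^ 2) ν := by
    have heq : (fun y => u y ^ 2) = fun y => a y ^ 2 / p y := funext husq
    rw [heq]
    exact hIint
  have hIw : Integrable (fun y => w y ^ 2) ν := by
    have : (fun y => w y ^ 2) = fun y => g y ^ 2 * p y := funext hwsq
    rw [this]; exact hg2p
  have hIuw : Integrable (fun y => u y * w y) ν := hga.congr (huw.mono fun y h => h.symm)
  have hIdef : I = ∫ y, u y ^ 2 ∂ν := by
    rw [hI]
    exact (integral_congr_ae (Filter.Eventually.of_forall fun y => (husq y).symm))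
  have hVdef : (∫ y, w y ^ 2 ∂ν) = V := by
    rw [hV]; exact integral_congr_ae (Filter.Eventually.of_forall hwsq)
  have hTdef : (∫ y, u y * w y ∂ν) = T := by
    rw [hT]; exact integral_congr_ae huw
  have key : 0 ≤ V ^ 2 * I - 2 * V * T * T + T ^ 2 * V := by
    have h0 : 0 ≤ ∫ y, (V * u y - T * w y) ^ 2 ∂ν := integral_nonneg fun y => sq_nonneg _
    have hexp : (fun y => (V * u y - T * w y) ^ 2)
        = fun y => V ^ 2 * u y ^ 2 - 2 * V * T * (u y * w y) + T ^ 2 * w y ^ 2 := by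
      funext y; ring
    have i1 : Integrable (fun y => V ^ 2 * u y ^ 2) ν := hIu.const_mul _
    have i2 : Integrable (fun y => 2 * V * T * (u y * w y)) ν := hIuw.const_mul _
    have i3 : Integrable (fun y => T ^ 2 * w y ^ 2) ν := hIw.const_mul _
    have i12 : Integrable (fun y => V ^ 2 * u y ^ 2 - 2 * V * T * (u y * w y)) ν := i1.sub i2
    rw [hexp, integral_add i12 i3, integral_sub i1 i2, integral_const_mul, integral_const_mul,
      integral_const_mul, ← hIdef, hVdef, hTdef] at h0
    linarith
  rcases eq_or_lt_of_le hVnn with hV0 | hV0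
  · exfalso
    have hw0 : (fun y => w y ^ 2) =ᵐ[ν] 0 :=
      (integral_eq_zero_iff_of_nonneg (fun y => sq_nonneg _) hIw).mp (by rw [hVdef, ← hV0])
    have hT0 : T = 0 := by
      rw [← hTdef]
      rw [integral_congr_ae (g := fun _ => (0:ℝ)) (hw0.mono fun y hy => by
        simp only [Pi.zero_apply] at hy ⊢
        have : w y = 0 := by
          have := sq_eq_zero_iff.mp hy
          exact this
        rw [this, mul_zero]), integral_zero]
    rw [hT0] at hcrit2
    simp at hcrit2
    linarith
  · have h1 : T ^ 2 ≤ V * I := by nlinarith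
    have h2 : V < c * (V * I) :=
      lt_of_lt_of_le hcrit2 (by nlinarith)
    nlinarith
end

section
/- Assume the generalized linear model setup below and that the function y ↦ (∫ (z²/σ² − 1) Q(y,z) dγ(z))² / p(y) is ν-integrable, with integral I. Define ḡ*(y) := (∫ (z²/σ² − 1) Q(y,z) dγ(z)) / p(y) when p(y) > 0 and ḡ*(y) := 0 otherwise. Then: (i) ḡ*(y) ≥ −1 for every y ∈ ℝ; (ii) ∫ ḡ*(y) p(y) dν(y) = 0, i.e. E[ḡ*(Y)] = 0; (iii) ∫∫ ḡ*(y) (z²/σ²) Q(y,z) dγ(z) dν(y) = I = ∫ ḡ*(y)² p(y) dν(y), i.e. E[ḡ*(Y) Z²/σ²] = E[ḡ*(Y)²] = I; (iv) consequently, if c · I > 1 then c · (E[ḡ*(Y) Z²/σ²])² > E[ḡ*(Y)²] and ḡ*(y) > −c · E[ḡ*(Y) Z²/σ²] for every y. (Achievability direction of the optimal weak-recovery threshold theorem: under c·I > 1 the choice ḡ = ḡ* satisfies the criticality condition.) -/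
open MeasureTheory ProbabilityTheory Real
open scoped NNReal ENNReal


lemma aux_integral_sq_exp {b : ℝ} (hb : 0 < b) :
    ∫ x : ℝ, x ^ 2 * rexp (-b * x ^ 2) = Real.sqrt (π / b) / (2 * b) := by
  have hd : ∀ x : ℝ, HasDerivAt (fun x => x * rexp (-b * x ^ 2))
      (rexp (-b * x ^ 2) - 2 * b * (x ^ 2 * rexp (-b * x ^ 2))) x := by
    intro x
    have h1 : HasDerivAt (fun x : ℝ => -b * x ^ 2) (-b * (2 * x)) x := by
      simpa using (hasDerivAt_pow 2 x).const_mul (-b)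
    have h3 := (hasDerivAt_id x).mul h1.exp
    simp only [id] at h3; exact h3.congr_deriv (by ring)
  have hint2 : Integrable (fun x : ℝ => x ^ 2 * rexp (-b * x ^ 2)) := by
    have := integrable_rpow_mul_exp_neg_mul_sq hb (s := 2) (by norm_num)
    have h2 : ∀ x : ℝ, x ^ (2 : ℝ) = x ^ (2 : ℕ) := fun x => by
      rw [show (2:ℝ) = ((2:ℕ):ℝ) by norm_num, Real.rpow_natCast]
    simpa [h2] using this
  have hf' : Integrable
      (fun x : ℝ => rexp (-b * x ^ 2) - 2 * b * (x ^ 2 * rexp (-b * x ^ 2))) :=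
    (integrable_exp_neg_mul_sq hb).sub (hint2.const_mul _)
  have h0 := integral_eq_zero_of_hasDerivAt_of_integrable hd hf'
    (integrable_mul_exp_neg_mul_sq hb)
  rw [integral_sub (integrable_exp_neg_mul_sq hb) (hint2.const_mul _),
    integral_gaussian, MeasureTheory.integral_const_mul] at h0
  have hb' : (2 : ℝ) * b ≠ 0 := by positivity
  rw [eq_div_iff hb']
  linarith

lemma aux_integrable_sq_exp {b : ℝ} (hb : 0 < b) :
    Integrable (fun x : ℝ => x ^ 2 * rexp (-b * x ^ 2)) := by
  have := integrable_rpow_mul_exp_neg_mul_sq hb (s := 2) (by norm_num)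
  have h2 : ∀ x : ℝ, x ^ (2 : ℝ) = x ^ (2 : ℕ) := fun x => by
    rw [show (2:ℝ) = ((2:ℕ):ℝ) by norm_num, Real.rpow_natCast]
  simpa [h2] using this



lemma aux_pdf_coe (v : ℝ≥0) :
    gaussianPDF 0 v = fun x => ((gaussianPDFReal 0 v x).toNNReal : ℝ≥0∞) := rfl

lemma aux_integral_gaussianReal {v : ℝ≥0} (hv : v ≠ 0) (g : ℝ → ℝ) :
    ∫ x, g x ∂(gaussianReal 0 v) = ∫ x, gaussianPDFReal 0 v x * g x := by
  rw [gaussianReal_of_var_ne_zero 0 hv, aux_pdf_coe,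
    integral_withDensity_eq_integral_smul (measurable_gaussianPDFReal 0 v).real_toNNReal g]
  congr 1
  ext x
  simp [NNReal.smul_def, Real.coe_toNNReal _ (gaussianPDFReal_nonneg 0 v x)]

lemma aux_integrable_gaussianReal {v : ℝ≥0} (hv : v ≠ 0) (g : ℝ → ℝ) :
    Integrable g (gaussianReal 0 v) ↔
      Integrable (fun x => gaussianPDFReal 0 v x * g x) volume := by
  rw [gaussianReal_of_var_ne_zero 0 hv, aux_pdf_coe,
    integrable_withDensity_iff_integrable_smul (measurable_gaussianPDFReal 0 v).real_toNNReal]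
  constructor <;> intro h <;> refine h.congr (Filter.Eventually.of_forall fun x => ?_) <;>
    simp [NNReal.smul_def, Real.coe_toNNReal _ (gaussianPDFReal_nonneg 0 v x)]

lemma aux_sq_moment' {v : ℝ≥0} (hv : v ≠ 0) :
    Integrable (fun x : ℝ => x ^ 2) (gaussianReal 0 v) ∧
      ∫ x, x ^ 2 ∂(gaussianReal 0 v) = (v : ℝ) := by
  have hv0 : (0:ℝ) < (v:ℝ) := by
    exact_mod_cast hv.bot_lt
  set b : ℝ := (2 * (v:ℝ))⁻¹ with hbdef
  have hb : 0 < b := by positivity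
  have hpdf : ∀ x : ℝ, gaussianPDFReal 0 v x * x ^ 2
      = (Real.sqrt (2 * π * v))⁻¹ * (x ^ 2 * rexp (-b * x ^ 2)) := by
    intro x
    rw [gaussianPDFReal, sub_zero]
    have h : -x ^ 2 / (2 * (v:ℝ)) = -b * x ^ 2 := by
      rw [hbdef]; field_simp
    rw [h]; ring
  have hint : Integrable (fun x => gaussianPDFReal 0 v x * x ^ 2) volume := by
    refine ((aux_integrable_sq_exp hb).const_mul (Real.sqrt (2 * π * v))⁻¹).congr
      (Filter.Eventually.of_forall fun x => ?_)
    exact (hpdf x).symm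
  refine ⟨(aux_integrable_gaussianReal hv _).2 hint, ?_⟩
  rw [aux_integral_gaussianReal hv]
  simp_rw [hpdf]
  rw [MeasureTheory.integral_const_mul, aux_integral_sq_exp hb]
  have h1 : π / b = 2 * π * v := by rw [hbdef]; field_simp
  have h2 : (2 * b) = (v:ℝ)⁻¹ := by rw [hbdef]; field_simp
  have hs : 0 < Real.sqrt (2 * π * v) := Real.sqrt_pos.mpr (by positivity)
  rw [h1, h2]
  field_simp


/-- Achievability direction of the optimal weak-recovery threshold theorem: the
preprocessing function `ḡ*(y) = (∫ (z²/σ²−1) Q(y,z) dγ(z)) / p(y)` (set to `0` when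
`p(y) = 0`) satisfies `ḡ* ≥ −1`, `E[ḡ*(Y)] = 0`,
`E[ḡ*(Y)Z²/σ²] = E[ḡ*(Y)²] = I`, and, whenever `c·I > 1`, the criticality
condition `c·(E[ḡ*(Y)Z²/σ²])² > E[ḡ*(Y)²]` together with
`ḡ*(y) > −c·E[ḡ*(Y)Z²/σ²]` for every `y`. -/
theorem stmt6 (σ : ℝ) (hσ : 0 < σ)
    (ν : Measure ℝ) [SigmaFinite ν]
    (Q : ℝ → ℝ → ℝ) (hQmeas : Measurable (Function.uncurry Q))
    (hQnonneg : ∀ y z, 0 ≤ Q y z)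
    (hQdens : ∀ z, ∫ y, Q y z ∂ν = 1)
    (γ : Measure ℝ) (hγ : γ = gaussianReal 0 (σ ^ 2).toNNReal)
    (p : ℝ → ℝ) (hp : ∀ y, p y = ∫ z, Q y z ∂γ)
    (I : ℝ)
    (hIint : Integrable (fun y => (∫ z, (z ^ 2 / σ ^ 2 - 1) * Q y z ∂γ) ^ 2 / p y) ν)
    (hI : I = ∫ y, (∫ z, (z ^ 2 / σ ^ 2 - 1) * Q y z ∂γ) ^ 2 / p y ∂ν)
    (gstar : ℝ → ℝ)
    (hgstar : ∀ y, gstar y =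
      if 0 < p y then (∫ z, (z ^ 2 / σ ^ 2 - 1) * Q y z ∂γ) / p y else 0)
    (c : ℝ) (hc : 0 < c) :
    (∀ y, -1 ≤ gstar y) ∧
    (∫ y, gstar y * p y ∂ν = 0) ∧
    ((∫ y, ∫ z, gstar y * (z ^ 2 / σ ^ 2) * Q y z ∂γ ∂ν = I) ∧
      (∫ y, (gstar y) ^ 2 * p y ∂ν = I)) ∧
    (c * I > 1 →
      (c * (∫ y, ∫ z, gstar y * (z ^ 2 / σ ^ 2) * Q y z ∂γ ∂ν) ^ 2 >
        ∫ y, ∫ z, (gstar y) ^ 2 * Q y z ∂γ ∂ν) ∧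
      ∀ y, gstar y > -c * ∫ y', ∫ z, gstar y' * (z ^ 2 / σ ^ 2) * Q y' z ∂γ ∂ν) := by
  have hγprob : IsProbabilityMeasure γ := by rw [hγ]; infer_instance
  have hγsf : SigmaFinite γ := by rw [hγ]; infer_instance
  have hσ2 : (0:ℝ) < σ ^ 2 := by positivity
  have hv : (σ ^ 2).toNNReal ≠ 0 := by
    simp only [ne_eq, Real.toNNReal_eq_zero, not_le]; exact hσ2
  have hvr : ((σ ^ 2).toNNReal : ℝ) = σ ^ 2 := Real.coe_toNNReal _ hσ2.le
  -- facts about f z = z^2/σ^2 - 1 under γ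
  have hsq : Integrable (fun z : ℝ => z ^ 2) γ ∧ ∫ z, z ^ 2 ∂γ = σ ^ 2 := by
    rw [hγ]
    exact ⟨(aux_sq_moment' hv).1, by rw [(aux_sq_moment' hv).2, hvr]⟩
  have hf_int : Integrable (fun z : ℝ => z ^ 2 / σ ^ 2 - 1) γ :=
    (hsq.1.div_const (σ ^ 2)).sub (integrable_const 1)
  have hf0 : ∫ z, (z ^ 2 / σ ^ 2 - 1) ∂γ = 0 := by
    rw [integral_sub (hsq.1.div_const (σ ^ 2)) (integrable_const 1),
      integral_div, hsq.2, integral_const, probReal_univ]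
    simp [div_self (ne_of_gt hσ2)]
  -- abbreviation
  set a : ℝ → ℝ := fun y => ∫ z, (z ^ 2 / σ ^ 2 - 1) * Q y z ∂γ with ha_def
  -- measurability bits
  have hQm1 : ∀ y, Measurable (Q y) := fun y => hQmeas.of_uncurry_left
  have hQm2 : ∀ z, Measurable (fun y => Q y z) := fun z => hQmeas.of_uncurry_right
  have hfm : Measurable (fun z : ℝ => z ^ 2 / σ ^ 2 - 1) :=
    ((measurable_id.pow_const 2).div_const _).sub_const 1
  have hQint_y : ∀ z, Integrable (fun y => Q y z) ν := by
    intro z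
    by_contra h
    have hz := hQdens z
    rw [integral_undef h] at hz
    exact one_ne_zero hz.symm
  have hQlint : ∀ z, ∫⁻ y, ENNReal.ofReal (Q y z) ∂ν = 1 := by
    intro z
    rw [← ofReal_integral_eq_lintegral_ofReal (hQint_y z)
      (Filter.Eventually.of_forall fun y => hQnonneg y z), hQdens z, ENNReal.ofReal_one]
  have hFm : Measurable (fun q : ℝ × ℝ => (q.2 ^ 2 / σ ^ 2 - 1) * Q q.1 q.2) :=
    (hfm.comp measurable_snd).mul hQmeas
  -- joint integrability
  have hF : Integrable (fun q : ℝ × ℝ => (q.2 ^ 2 / σ ^ 2 - 1) * Q q.1 q.2) (ν.prod γ) := by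
    refine ⟨hFm.aestronglyMeasurable, ?_⟩
    show (∫⁻ q, ‖(q.2 ^ 2 / σ ^ 2 - 1) * Q q.1 q.2‖ₑ ∂(ν.prod γ)) < ⊤
    rw [lintegral_prod _ hFm.enorm.aemeasurable]
    rw [lintegral_lintegral_swap (by exact hFm.enorm.aemeasurable)]
    have hinner : ∀ z : ℝ, ∫⁻ y, ‖(z ^ 2 / σ ^ 2 - 1) * Q y z‖ₑ ∂ν
        = ‖z ^ 2 / σ ^ 2 - 1‖ₑ := by
      intro z
      have : ∀ y : ℝ, ‖(z ^ 2 / σ ^ 2 - 1) * Q y z‖ₑ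
          = ‖z ^ 2 / σ ^ 2 - 1‖ₑ * ENNReal.ofReal (Q y z) := by
        intro y
        rw [enorm_mul, Real.enorm_eq_ofReal (hQnonneg y z)]
      simp_rw [this]
      rw [lintegral_const_mul _ ((hQm2 z).ennreal_ofReal), hQlint z, mul_one]
    simp_rw [hinner]
    have := hf_int.2
    rw [HasFiniteIntegral] at this
    exact this
  have ha_int : Integrable a ν := hF.integral_prod_left
  have ha0 : ∫ y, a y ∂ν = 0 := by
    rw [ha_def]
    rw [integral_integral_swap (f := fun y z => (z ^ 2 / σ ^ 2 - 1) * Q y z)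
      (by exact hF)]
    have : ∀ z : ℝ, ∫ y, (z ^ 2 / σ ^ 2 - 1) * Q y z ∂ν = (z ^ 2 / σ ^ 2 - 1) := by
      intro z
      rw [MeasureTheory.integral_const_mul, hQdens z, mul_one]
    simp_rw [this]
    exact hf0
  -- a.e. integrability of Q y
  have hQae : ∀ᵐ y ∂ν, Integrable (fun z => Q y z) γ := by
    have hmeas : Measurable fun y => ∫⁻ z, ENNReal.ofReal (Q y z) ∂γ :=
      Measurable.lintegral_prod_right' (f := fun q : ℝ × ℝ => ENNReal.ofReal (Q q.1 q.2))
        hQmeas.ennreal_ofReal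
    have h1 : ∫⁻ y, (∫⁻ z, ENNReal.ofReal (Q y z) ∂γ) ∂ν = 1 := by
      rw [lintegral_lintegral_swap (by exact hQmeas.ennreal_ofReal.aemeasurable)]
      simp_rw [hQlint]
      simp
    have h2 : ∀ᵐ y ∂ν, (∫⁻ z, ENNReal.ofReal (Q y z) ∂γ) < ⊤ :=
      ae_lt_top hmeas (by rw [h1]; exact ENNReal.one_ne_top)
    filter_upwards [h2] with y hy
    refine ⟨(hQm1 y).aestronglyMeasurable, ?_⟩
    rw [HasFiniteIntegral]
    have : ∀ z : ℝ, ‖Q y z‖ₑ = ENNReal.ofReal (Q y z) := fun z =>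
      Real.enorm_eq_ofReal (hQnonneg y z)
    simp_rw [this]
    exact hy
  have hpnn : ∀ y, 0 ≤ p y := fun y =>
    (hp y) ▸ integral_nonneg fun z => hQnonneg y z
  -- degenerate case
  have hpz : ∀ y, Integrable (fun z => Q y z) γ → ¬ 0 < p y → a y = 0 ∧ p y = 0 := by
    intro y hQy h
    have hp0 : p y = 0 := le_antisymm (not_lt.1 h) (hpnn y)
    have hQ0 : (fun z => Q y z) =ᵐ[γ] 0 := by
      have := (integral_eq_zero_iff_of_nonneg
        (fun z => hQnonneg y z) hQy).mp (by rw [← hp y]; exact hp0)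
      exact this
    refine ⟨?_, hp0⟩
    rw [ha_def]
    simp only []
    rw [show (0:ℝ) = ∫ z, (0:ℝ) ∂γ by simp]
    apply integral_congr_ae
    filter_upwards [hQ0] with z hz
    simp [hz]
  have hgp : (fun y => gstar y * p y) =ᵐ[ν] a := by
    filter_upwards [hQae] with y hy
    rw [hgstar y]
    split_ifs with h
    · exact div_mul_cancel₀ _ (ne_of_gt h)
    · simp [(hpz y hy h).1]
  have bullet2 : ∫ y, gstar y * p y ∂ν = 0 := by
    rw [integral_congr_ae hgp]; exact ha0
  have hg2p : ∀ y, gstar y ^ 2 * p y = a y ^ 2 / p y := by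
    intro y
    rw [hgstar y]
    split_ifs with h
    · have halg : ∀ A P : ℝ, 0 < P → (A / P) ^ 2 * P = A ^ 2 / P := by
        intro A P hP; field_simp
      exact halg _ _ h
    · have hp0 : p y = 0 := le_antisymm (not_lt.1 h) (hpnn y)
      rw [hp0]; simp
  have bullet4 : ∫ y, (gstar y) ^ 2 * p y ∂ν = I := by
    simp_rw [hg2p]; exact hI.symm
  -- the cross term
  have hcross_inner : ∀ y, (∫ z, gstar y * (z ^ 2 / σ ^ 2) * Q y z ∂γ)
      = gstar y * ∫ z, (z ^ 2 / σ ^ 2) * Q y z ∂γ := by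
    intro y
    simp_rw [mul_assoc]
    exact MeasureTheory.integral_const_mul _ _
  have hkey : ∀ᵐ y ∂ν, gstar y * (∫ z, (z ^ 2 / σ ^ 2) * Q y z ∂γ)
      = a y ^ 2 / p y + gstar y * p y := by
    filter_upwards [hQae] with y hQy
    by_cases hb : Integrable (fun z => z ^ 2 / σ ^ 2 * Q y z) γ
    · have hm : (∫ z, (z ^ 2 / σ ^ 2) * Q y z ∂γ) = a y + p y := by
        rw [ha_def]
        simp only []
        rw [hp y, ← integral_add]
        · congr 1; ext z; ring
        · exact hb.sub hQy |>.congr (Filter.Eventually.of_forall fun z => by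
            simp only [Pi.sub_apply]; ring)
        · exact hQy
      rw [hm, hgstar y]
      split_ifs with h
      · have halg : ∀ A P : ℝ, 0 < P → A / P * (A + P) = A ^ 2 / P + A / P * P := by
          intro A P hP; field_simp
        exact halg _ _ h
      · obtain ⟨ha0', hp0⟩ := hpz y hQy h
        rw [ha0', hp0]; simp
    · have hm0 : (∫ z, (z ^ 2 / σ ^ 2) * Q y z ∂γ) = 0 := integral_undef hb
      have ha0' : a y = 0 := by
        rw [ha_def]
        apply integral_undef
        intro hcon
        apply hb
        have heq : (fun z => z ^ 2 / σ ^ 2 * Q y z)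
            = fun z => (z ^ 2 / σ ^ 2 - 1) * Q y z + Q y z := by
          ext z; ring
        rw [heq]
        exact hcon.add hQy
      rw [hm0, mul_zero, ha0', hgstar y]
      split_ifs with h
      · rw [show (∫ z, (z ^ 2 / σ ^ 2 - 1) * Q y z ∂γ) = a y from rfl, ha0']
        simp
      · have hp0 : p y = 0 := le_antisymm (not_lt.1 h) (hpnn y)
        rw [hp0]; simp
  have bullet3 : ∫ y, ∫ z, gstar y * (z ^ 2 / σ ^ 2) * Q y z ∂γ ∂ν = I := by
    simp_rw [hcross_inner]
    rw [integral_congr_ae hkey, integral_add hIint (ha_int.congr hgp.symm),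
      integral_congr_ae hgp, ha0, add_zero, hI]
  have bullet5 : ∫ y, ∫ z, (gstar y) ^ 2 * Q y z ∂γ ∂ν = I := by
    have : ∀ y, (∫ z, (gstar y) ^ 2 * Q y z ∂γ) = (gstar y) ^ 2 * p y := by
      intro y
      rw [MeasureTheory.integral_const_mul, hp y]
    simp_rw [this]
    exact bullet4
  have bullet1 : ∀ y, -1 ≤ gstar y := by
    intro y
    rw [hgstar y]
    split_ifs with h
    · by_cases hfa : Integrable (fun z => (z ^ 2 / σ ^ 2 - 1) * Q y z) γ
      · have hQy : Integrable (fun z => Q y z) γ := by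
          by_contra hcon
          rw [hp y, integral_undef hcon] at h
          exact lt_irrefl 0 h
        have hmono : -(p y) ≤ ∫ z, (z ^ 2 / σ ^ 2 - 1) * Q y z ∂γ := by
          rw [hp y, ← integral_neg]
          apply integral_mono hQy.neg hfa
          intro z
          simp only [Pi.neg_apply]
          have h1 : 0 ≤ z ^ 2 / σ ^ 2 := by positivity
          nlinarith [mul_nonneg h1 (hQnonneg y z), hQnonneg y z]
        rw [le_div_iff₀ h]
        linarith
      · rw [integral_undef hfa]
        norm_num [zero_div]
    · norm_num
  refine ⟨bullet1, bullet2, ⟨bullet3, bullet4⟩, fun hcI => ?_⟩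
  have hI_pos : 0 < I := by nlinarith
  constructor
  · rw [bullet3, bullet5]
    nlinarith
  · intro y
    rw [bullet3]
    have := bullet1 y
    nlinarith
end

section
/- Let (Ω, ℱ, P) be a probability space, let Z and K be square-integrable real random variables with E[Z²] = σ² > 0, E[K²] = 1 and E[Z·K] = 0, and let Y be an arbitrary real random variable. Fix τ₁ ≥ 1/σ², set a := τ₁ − 1/σ² and P := a·Z + √a·K. Let Ẑ := E[Z | σ(P, Y)] be the conditional expectation of Z given the σ-algebra generated by the pair (P, Y), set c := σ² − E[Z·Ẑ], assume c ≠ 0, and set τ₂ := 1/c − τ₁. Then E[ ( (1/c)·Ẑ − P )² ] = σ² · τ₂ · ( τ₂ + 1/σ² ). -/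
open MeasureTheory

private lemma memLp_two_condexp {Ω : Type*} {m m0 : MeasurableSpace Ω} (hm : m ≤ m0)
    (μ : Measure Ω) [IsFiniteMeasure μ] {Z : Ω → ℝ} (hZ2 : MemLp Z 2 μ) :
    MemLp (μ[Z|m]) 2 μ := by
  haveI : IsFiniteMeasure (μ.trim hm) := isFiniteMeasure_trim hm
  have hZint : Integrable Z μ := hZ2.integrable one_le_two
  have hfg : (condExpL2 ℝ ℝ hm (hZ2.toLp Z) : Ω → ℝ) =ᵐ[μ] μ[Z|m] := by
    refine ae_eq_condExp_of_forall_setIntegral_eq hm hZint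
      (fun s hs hμs => (integrable_condExpL2_of_isFiniteMeasure hm).integrableOn)
      (fun s hs hμs => ?_) (aestronglyMeasurable_condExpL2 hm _)
    rw [integral_condExpL2_eq hm (hZ2.toLp Z) hs hμs.ne]
    exact setIntegral_congr_ae (hm s hs) ((hZ2.coeFn_toLp).mono fun x hx _ => hx)
  exact (Lp.memLp ((condExpL2 ℝ ℝ hm (hZ2.toLp Z) : lpMeas ℝ ℝ m 2 μ) : Lp ℝ 2 μ)).ae_eq hfg

/-- Fixed-point identity for the output channel of spectrally initialized
Bayes-GVAMP: with `a = τ₁ − 1/σ²`, `P = a·Z + √a·K`, `Ẑ = E[Z | σ(P, Y)]`,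
`c = σ² − E[Z·Ẑ] ≠ 0` and `τ₂ = 1/c − τ₁`, one has
`E[(c⁻¹·Ẑ − P)²] = σ²·τ₂·(τ₂ + 1/σ²)`. -/
theorem stmt10 {Ω : Type*} [MeasurableSpace Ω] (μ : Measure Ω)
    [IsProbabilityMeasure μ]
    (Z K Y : Ω → ℝ) (hZm : Measurable Z) (hKm : Measurable K) (hYm : Measurable Y)
    (hZ2 : MemLp Z 2 μ) (hK2 : MemLp K 2 μ)
    (σ : ℝ) (hσ : 0 < σ)
    (hEZ : ∫ ω, (Z ω) ^ 2 ∂μ = σ ^ 2)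
    (hEK : ∫ ω, (K ω) ^ 2 ∂μ = 1)
    (hZK : ∫ ω, Z ω * K ω ∂μ = 0)
    (τ₁ a : ℝ) (hτ₁ : 1 / σ ^ 2 ≤ τ₁) (ha : a = τ₁ - 1 / σ ^ 2)
    (P : Ω → ℝ) (hP : ∀ ω, P ω = a * Z ω + Real.sqrt a * K ω)
    (Zhat : Ω → ℝ)
    (hZhat : Zhat = MeasureTheory.condExp
      (MeasurableSpace.comap (fun ω => (P ω, Y ω)) inferInstance) μ Z)
    (c τ₂ : ℝ) (hc : c = σ ^ 2 - ∫ ω, Z ω * Zhat ω ∂μ) (hc0 : c ≠ 0)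
    (hτ₂ : τ₂ = 1 / c - τ₁) :
    ∫ ω, ((1 / c) * Zhat ω - P ω) ^ 2 ∂μ = σ ^ 2 * τ₂ * (τ₂ + 1 / σ ^ 2) := by
  have hσ2 : (σ : ℝ) ^ 2 ≠ 0 := pow_ne_zero 2 hσ.ne'
  have ha0 : 0 ≤ a := by
    rw [ha]; linarith
  have hsq : Real.sqrt a * Real.sqrt a = a := Real.mul_self_sqrt ha0
  have hPfun : P = fun ω => a * Z ω + Real.sqrt a * K ω := funext hP
  have hPmeas : Measurable P := by
    rw [hPfun]; exact (measurable_const.mul hZm).add (measurable_const.mul hKm)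
  have hpair : Measurable fun ω => (P ω, Y ω) := hPmeas.prodMk hYm
  -- the σ-algebra
  set m : MeasurableSpace Ω :=
    MeasurableSpace.comap (fun ω => (P ω, Y ω)) inferInstance with hmdef
  have hm := hpair.comap_le
  haveI : IsFiniteMeasure (μ.trim hm) := isFiniteMeasure_trim hm
  have hZint : Integrable Z μ := hZ2.integrable one_le_two
  -- m-measurability of P and Zhat
  have hpair_m : Measurable[m] fun ω => (P ω, Y ω) :=
    Measurable.of_comap_le le_rfl
  have hPm : StronglyMeasurable[m] P :=
    (measurable_fst.comp hpair_m).stronglyMeasurable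
  have hZhat_m : StronglyMeasurable[m] Zhat := by
    rw [hZhat]; exact stronglyMeasurable_condExp
  -- Zhat is in L²
  have hZhat2 : MemLp Zhat 2 μ := by
    rw [hZhat]; exact memLp_two_condexp hm μ hZ2
  have hP2 : MemLp P 2 μ := by
    rw [hPfun]
    exact (hZ2.const_mul a).add (hK2.const_mul (Real.sqrt a))
  -- products of L² functions are integrable
  have hmul : ∀ {f g : Ω → ℝ}, MemLp f 2 μ → MemLp g 2 μ →
      Integrable (fun ω => f ω * g ω) μ := by
    intro f g hf hg
    have h := hf.smul hg (r := 1) (hpqr := ⟨by simp [one_div, ENNReal.inv_two_add_inv_two]⟩)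
    have heq : (g • f) = fun ω => f ω * g ω := by
      funext ω; simp [mul_comm]
    rw [heq] at h
    exact memLp_one_iff_integrable.mp h
  have hZZ_int : Integrable (fun ω => Z ω * Z ω) μ := hmul hZ2 hZ2
  have hZK_int : Integrable (fun ω => Z ω * K ω) μ := hmul hZ2 hK2
  have hKK_int : Integrable (fun ω => K ω * K ω) μ := hmul hK2 hK2
  have hZsq_int : Integrable (fun ω => Z ω ^ 2) μ := by simpa [sq] using hZZ_int
  have hKsq_int : Integrable (fun ω => K ω ^ 2) μ := by simpa [sq] using hKK_int
  -- ∫ Z P = a σ²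
  have hZP : ∫ ω, Z ω * P ω ∂μ = a * σ ^ 2 := by
    have hpt : ∀ ω, Z ω * P ω = a * Z ω ^ 2 + Real.sqrt a * (Z ω * K ω) := by
      intro ω; rw [hP]; ring
    simp_rw [hpt]
    rw [integral_add (hZsq_int.const_mul a) (hZK_int.const_mul _),
      integral_const_mul, integral_const_mul, hEZ, hZK]
    ring
  -- ∫ P² = a² σ² + a
  have hPP : ∫ ω, P ω ^ 2 ∂μ = a ^ 2 * σ ^ 2 + a := by
    have hpt : ∀ ω, P ω ^ 2 = a ^ 2 * Z ω ^ 2 +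
        ((2 * a * Real.sqrt a) * (Z ω * K ω) + a * K ω ^ 2) := by
      intro ω; rw [hP]
      calc (a * Z ω + Real.sqrt a * K ω) ^ 2
          = a ^ 2 * Z ω ^ 2 + ((2 * a * Real.sqrt a) * (Z ω * K ω) +
            (Real.sqrt a * Real.sqrt a) * K ω ^ 2) := by ring
        _ = _ := by rw [hsq]
    have hB : Integrable (fun ω => 2 * a * Real.sqrt a * (Z ω * K ω) + a * K ω ^ 2) μ :=
      (hZK_int.const_mul _).add (hKsq_int.const_mul _)
    simp_rw [hpt]
    rw [integral_add (hZsq_int.const_mul _) hB,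
      integral_add (hZK_int.const_mul _) (hKsq_int.const_mul _),
      integral_const_mul, integral_const_mul, integral_const_mul, hEZ, hEK, hZK]
    ring
  -- ∫ Zhat P = ∫ Z P  (pull-out + tower)
  have hPZ_int : Integrable (P * Z) μ := hmul hP2 hZ2
  have hZhatP : ∫ ω, Zhat ω * P ω ∂μ = ∫ ω, Z ω * P ω ∂μ := by
    have hpull : μ[P * Z|m] =ᵐ[μ] P * μ[Z|m] :=
      condExp_mul_of_stronglyMeasurable_left hPm hPZ_int hZint
    have h1 : ∫ ω, (μ[P * Z|m]) ω ∂μ = ∫ ω, (P * Z) ω ∂μ :=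
      integral_condExp hm (f := P * Z)
    have h2 : ∫ ω, (μ[P * Z|m]) ω ∂μ = ∫ ω, (P * μ[Z|m]) ω ∂μ :=
      integral_congr_ae hpull
    have h3 : ∫ ω, (P * μ[Z|m]) ω ∂μ = ∫ ω, Zhat ω * P ω ∂μ := by
      rw [hZhat]; congr 1; funext ω; simp [mul_comm]
    calc ∫ ω, Zhat ω * P ω ∂μ = ∫ ω, (μ[P * Z|m]) ω ∂μ := by rw [h2, h3]
      _ = ∫ ω, Z ω * P ω ∂μ := by
          rw [h1]; congr 1; funext ω; simp [mul_comm]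
  -- ∫ Zhat² = ∫ Z Zhat
  have hZhZ_int : Integrable (Zhat * Z) μ := hmul hZhat2 hZ2
  have hZhatsq : ∫ ω, Zhat ω * Zhat ω ∂μ = ∫ ω, Z ω * Zhat ω ∂μ := by
    have hpull : μ[Zhat * Z|m] =ᵐ[μ] Zhat * μ[Z|m] :=
      condExp_mul_of_stronglyMeasurable_left hZhat_m hZhZ_int hZint
    have h1 : ∫ ω, (μ[Zhat * Z|m]) ω ∂μ = ∫ ω, (Zhat * Z) ω ∂μ :=
      integral_condExp hm (f := Zhat * Z)
    have h2 : ∫ ω, (μ[Zhat * Z|m]) ω ∂μ = ∫ ω, (Zhat * μ[Z|m]) ω ∂μ :=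
      integral_congr_ae hpull
    calc ∫ ω, Zhat ω * Zhat ω ∂μ = ∫ ω, (Zhat * μ[Z|m]) ω ∂μ := by
          rw [hZhat]; rfl
      _ = ∫ ω, (Zhat * Z) ω ∂μ := by rw [← h2, h1]
      _ = ∫ ω, Z ω * Zhat ω ∂μ := by
          congr 1; funext ω; simp [mul_comm]
  -- expand the square
  have hZhZh_int : Integrable (fun ω => Zhat ω * Zhat ω) μ := hmul hZhat2 hZhat2
  have hZhP_int : Integrable (fun ω => Zhat ω * P ω) μ := hmul hZhat2 hP2
  have hPsq_int : Integrable (fun ω => P ω ^ 2) μ := by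
    have := hmul hP2 hP2; simpa [sq] using this
  have hexp : ∀ ω, ((1 / c) * Zhat ω - P ω) ^ 2 =
      (1 / c) ^ 2 * (Zhat ω * Zhat ω) + ((-(2 / c)) * (Zhat ω * P ω) + P ω ^ 2) := by
    intro ω; field_simp; ring
  have hgval : ∫ ω, Z ω * Zhat ω ∂μ = σ ^ 2 - c := by linarith [hc.symm]
  calc ∫ ω, ((1 / c) * Zhat ω - P ω) ^ 2 ∂μ
      = ∫ ω, ((1 / c) ^ 2 * (Zhat ω * Zhat ω) +
          ((-(2 / c)) * (Zhat ω * P ω) + P ω ^ 2)) ∂μ := by simp_rw [hexp]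
    _ = (1 / c) ^ 2 * (σ ^ 2 - c) + ((-(2 / c)) * (a * σ ^ 2) + (a ^ 2 * σ ^ 2 + a)) := by
        have hB : Integrable (fun ω => -(2 / c) * (Zhat ω * P ω) + P ω ^ 2) μ :=
          (hZhP_int.const_mul _).add hPsq_int
        rw [integral_add (hZhZh_int.const_mul _) hB,
          integral_add (hZhP_int.const_mul _) hPsq_int,
          integral_const_mul, integral_const_mul, hZhatsq, hgval, hZhatP, hZP, hPP]
    _ = σ ^ 2 * τ₂ * (τ₂ + 1 / σ ^ 2) := by
        rw [hτ₂, ha]; field_simp; ring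
end
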